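/- arXiv:1305.3894 — 2 statements merged into one kernel-verified Lean document; each statement's English description precedes it below -/
import Mathlib

section
/- The number of vertices of the polytope of ordered one-qubit spectra for L qubits (L ≥ 3) equals 2^L − L. More precisely, the points (p₁,…,p_L) ∈ [0,1/2]^L with each p_i ∈ {0, 1/2} and |{i : p_i = 1/2}| ≠ 1 are exactly the vertices of the polytope defined by 0 ≤ p_i ≤ 1/2 and p_i ≤ Σ_{j≠i} p_j for all i, and there are 2^L − L of them. -/
/-
A point of `{0, 1/2}^L` is a vertex of the cube `[0, 1/2]^L`, hence an extreme point of `P` as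
soon as it lies in `P`, which happens exactly when the number of coordinates equal to `1/2` is
not `1`.

Conversely, let `p ∈ P` have a fractional coordinate (strictly between `0` and `1/2`). We find a
nonzero direction `v` that keeps every constraint tight at `p` tight, so that `p ± ε v ∈ P` for
small `ε` and `p` is not extreme. If no constraint `2 p_i ≤ Σ p` is tight, take `v = e_j` for a
fractional `j`. If two coordinates `j ≠ m` are fractional, take `v = e_j + e_m` when one of them
is tight (two tight constraints force all other coordinates to vanish) and `v = e_j - e_m`
otherwise. If `j` is the only fractional coordinate and some constraint is tight, that
constraint makes `2 p_j` an integer.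
-/

open Finset Filter Topology

lemma eq_zero_of_mem_extremePoints_of_eventually_add_smul_mem {E : Type*} [AddCommGroup E]
    [Module ℝ E] {S : Set E} {p v : E} (hp : p ∈ S.extremePoints ℝ)
    (h : ∀ᶠ t in 𝓝 (0 : ℝ), p + t • v ∈ S) : v = 0 := by
  obtain ⟨ε, hε, hball⟩ := Metric.eventually_nhds_iff.1 h
  have hpos : p + (ε / 2) • v ∈ S := hball (by rw [Real.dist_0_eq_abs, abs_of_pos] <;> linarith)
  have hneg : p + (-(ε / 2)) • v ∈ S :=
    hball (by rw [Real.dist_0_eq_abs, abs_neg, abs_of_pos] <;> linarith)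
  have hmid : p ∈ openSegment ℝ (p + (ε / 2) • v) (p + (-(ε / 2)) • v) :=
    ⟨1/2, 1/2, by norm_num, by norm_num, by norm_num, by module⟩
  have : (ε / 2) • v = 0 := by simpa using hp.2 hpos hneg hmid
  exact (smul_eq_zero.1 this).resolve_left (by positivity)

lemma eventually_add_mul_le {a b c : ℝ} (h : a ≤ c) (hb : a = c → b = 0) :
    ∀ᶠ t in 𝓝 (0 : ℝ), a + t * b ≤ c := by
  rcases h.eq_or_lt with rfl | hlt
  · simp [hb rfl]
  · have : Tendsto (fun t : ℝ => a + t * b) (𝓝 0) (𝓝 (a + 0 * b)) :=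
      tendsto_const_nhds.add (tendsto_id.mul_const b)
    rw [zero_mul, add_zero] at this
    exact (this.eventually_lt_const hlt).mono fun _ => le_of_lt

def spectraPolytope (ι : Type*) [Fintype ι] [DecidableEq ι] : Set (ι → ℝ) :=
  {p | ∀ i, 0 ≤ p i ∧ p i ≤ 1/2 ∧ p i ≤ ∑ j ∈ univ.erase i, p j}

def halfVertices (ι : Type*) : Set (ι → ℝ) :=
  {p | (∀ i, p i = 0 ∨ p i = 1/2) ∧ {i | p i = 1/2}.ncard ≠ 1}

section

variable {ι : Type*} [Fintype ι] [DecidableEq ι] {p : ι → ℝ}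

lemma mem_spectraPolytope_iff :
    p ∈ spectraPolytope ι ↔ ∀ i, 0 ≤ p i ∧ p i ≤ 1/2 ∧ 2 * p i ≤ ∑ j, p j := by
  refine forall_congr' fun i => and_congr_right fun _ => and_congr_right fun _ => ?_
  rw [sum_erase_eq_sub (mem_univ i)]
  constructor <;> intro h <;> linarith

lemma eventually_add_smul_mem_spectraPolytope (hp : p ∈ spectraPolytope ι) {v : ι → ℝ}
    (hsupp : ∀ i, p i = 0 ∨ p i = 1/2 → v i = 0)
    (htight : ∀ i, 2 * p i = ∑ j, p j → 2 * v i = ∑ j, v j) :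
    ∀ᶠ t in 𝓝 (0 : ℝ), p + t • v ∈ spectraPolytope ι := by
  rw [mem_spectraPolytope_iff] at hp
  have hconstraints : ∀ i, ∀ᶠ t in 𝓝 (0 : ℝ), -p i + t * -v i ≤ 0 ∧ p i + t * v i ≤ 1/2 ∧
      (2 * p i - ∑ j, p j) + t * (2 * v i - ∑ j, v j) ≤ 0 := fun i =>
    (eventually_add_mul_le (by linarith [(hp i).1])
      fun h => by rw [hsupp i (.inl (by linarith)), neg_zero]).and <|
    (eventually_add_mul_le (hp i).2.1 fun h => hsupp i (.inr h)).and
      (eventually_add_mul_le (by linarith [(hp i).2.2])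
        fun h => by linarith [htight i (by linarith)])
  filter_upwards [eventually_all.2 hconstraints] with t ht
  rw [mem_spectraPolytope_iff]
  intro i
  simp only [Pi.add_apply, Pi.smul_apply, smul_eq_mul, sum_add_distrib, ← mul_sum]
  obtain ⟨h₀, h₁, h₂⟩ := ht i
  exact ⟨by linarith, h₁, by linarith⟩

lemma eq_zero_of_mem_extremePoints_spectraPolytope
    (hp : p ∈ (spectraPolytope ι).extremePoints ℝ) {v : ι → ℝ}
    (hsupp : ∀ i, p i = 0 ∨ p i = 1/2 → v i = 0)
    (htight : ∀ i, 2 * p i = ∑ j, p j → 2 * v i = ∑ j, v j) : v = 0 :=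
  eq_zero_of_mem_extremePoints_of_eventually_add_smul_mem hp
    (eventually_add_smul_mem_spectraPolytope hp.1 hsupp htight)

lemma eq_zero_of_two_mul_eq_sum_of_two_mul_eq_sum (hp : p ∈ spectraPolytope ι) {j k m : ι}
    (hjk : j ≠ k) (hj : 2 * p j = ∑ i, p i) (hk : 2 * p k = ∑ i, p i) (hmj : m ≠ j)
    (hmk : m ≠ k) : p m = 0 := by
  rw [mem_spectraPolytope_iff] at hp
  have hle : ∑ i ∈ {j, k, m}, p i ≤ ∑ i, p i :=
    sum_le_sum_of_subset_of_nonneg (subset_univ _) fun i _ _ => (hp i).1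
  rw [sum_insert (by simp [hjk, hmj.symm]), sum_pair hmk.symm] at hle
  linarith [(hp m).1]

lemma notMem_extremePoints_of_forall_two_mul_ne_sum {j : ι} (hj : ¬(p j = 0 ∨ p j = 1/2))
    (hslack : ∀ i, 2 * p i ≠ ∑ j, p j) : p ∉ (spectraPolytope ι).extremePoints ℝ := fun hp => by
  have hv := eq_zero_of_mem_extremePoints_spectraPolytope hp (v := Pi.single j 1)
    (fun i hi => Pi.single_eq_of_ne (by rintro rfl; exact hj hi) _)
    (fun i hi => (hslack i hi).elim)
  simpa using congrFun hv j

lemma notMem_extremePoints_of_two_mul_eq_sum {j m : ι} (hmj : m ≠ j)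
    (hj : ¬(p j = 0 ∨ p j = 1/2)) (hm : ¬(p m = 0 ∨ p m = 1/2)) (htight : 2 * p j = ∑ i, p i) :
    p ∉ (spectraPolytope ι).extremePoints ℝ := fun hp => by
  have hv := eq_zero_of_mem_extremePoints_spectraPolytope hp (v := Pi.single j 1 + Pi.single m 1)
    (fun i hi => by
      obtain ⟨hij, him⟩ : i ≠ j ∧ i ≠ m := ⟨by rintro rfl; exact hj hi, by rintro rfl; exact hm hi⟩
      simp [hij, him])
    (fun i hi => by
      by_cases hij : i = j
      · simp [hij, hmj, sum_add_distrib]; norm_num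
      by_cases him : i = m
      · simp [him, hmj, sum_add_distrib]; norm_num
      exact absurd (eq_zero_of_two_mul_eq_sum_of_two_mul_eq_sum hp.1 (Ne.symm hij) htight hi hmj
        (Ne.symm him)) fun h => hm (.inl h))
  simpa [hmj.symm] using congrFun hv j

lemma notMem_extremePoints_of_two_mul_ne_sum {j m : ι} (hmj : m ≠ j)
    (hj : ¬(p j = 0 ∨ p j = 1/2)) (hm : ¬(p m = 0 ∨ p m = 1/2))
    (hjslack : 2 * p j ≠ ∑ i, p i) (hmslack : 2 * p m ≠ ∑ i, p i) :
    p ∉ (spectraPolytope ι).extremePoints ℝ := fun hp => by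
  have hv := eq_zero_of_mem_extremePoints_spectraPolytope hp (v := Pi.single j 1 - Pi.single m 1)
    (fun i hi => by
      obtain ⟨hij, him⟩ : i ≠ j ∧ i ≠ m := ⟨by rintro rfl; exact hj hi, by rintro rfl; exact hm hi⟩
      simp [hij, him])
    (fun i hi => by
      obtain ⟨hij, him⟩ : i ≠ j ∧ i ≠ m :=
        ⟨by rintro rfl; exact hjslack hi, by rintro rfl; exact hmslack hi⟩
      simp [hij, him, sum_sub_distrib])
  simpa [hmj.symm] using congrFun hv j

lemma two_mul_mem_range_intCast {j k : ι}
    (hrest : ∀ m ≠ j, p m = 0 ∨ p m = 1/2) (hk : 2 * p k = ∑ i, p i) :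
    2 * p j ∈ (Int.castAddHom ℝ).range := by
  set G := (Int.castAddHom ℝ).range
  have hG : ∀ m ≠ j, 2 * p m ∈ G := fun m hm => by
    rcases hrest m hm with h | h
    · exact ⟨0, by simp [h]⟩
    · exact ⟨1, by simp [h]⟩
  have hrestG : 2 * ∑ m ∈ univ.erase j, p m ∈ G := by
    rw [mul_sum]
    exact G.sum_mem fun m hm => hG m (ne_of_mem_erase hm)
  have hsplit : ∑ i, p i = p j + ∑ m ∈ univ.erase j, p m := (add_sum_erase _ _ (mem_univ j)).symm
  by_cases hkj : k = j
  · subst hkj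
    convert hrestG using 1
    linarith
  · convert G.sub_mem (G.add_mem (hG k hkj) (hG k hkj)) hrestG using 1
    linarith

lemma eq_zero_or_eq_half_of_mem_extremePoints (hp : p ∈ (spectraPolytope ι).extremePoints ℝ)
    (i : ι) : p i = 0 ∨ p i = 1/2 := by
  by_contra hj
  by_cases hm : ∃ m ≠ i, ¬(p m = 0 ∨ p m = 1/2)
  · obtain ⟨m, hmi, hm⟩ := hm
    by_cases hitight : 2 * p i = ∑ k, p k
    · exact notMem_extremePoints_of_two_mul_eq_sum hmi hj hm hitight hp
    by_cases hmtight : 2 * p m = ∑ k, p k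
    · exact notMem_extremePoints_of_two_mul_eq_sum (Ne.symm hmi) hm hj hmtight hp
    exact notMem_extremePoints_of_two_mul_ne_sum hmi hj hm hitight hmtight hp
  push Not at hm
  by_cases htight : ∃ k, 2 * p k = ∑ i, p i
  · obtain ⟨k, hk⟩ := htight
    obtain ⟨n, hn⟩ := two_mul_mem_range_intCast hm hk
    rw [Int.coe_castAddHom] at hn
    obtain ⟨h0, hhalf, -⟩ := mem_spectraPolytope_iff.1 hp.1 i
    have hn01 : n = 0 ∨ n = 1 := by
      have : (0 : ℝ) ≤ n ∧ (n : ℝ) ≤ 1 := ⟨by linarith, by linarith⟩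
      norm_cast at this
      omega
    rcases hn01 with rfl | rfl
    · exact hj (.inl (by simp at hn; linarith))
    · exact hj (.inr (by simp at hn; linarith))
  · push Not at htight
    exact notMem_extremePoints_of_forall_two_mul_ne_sum hj htight hp

lemma ncard_setOf_eq_half_ne_one (hp : p ∈ spectraPolytope ι)
    (hvals : ∀ i, p i = 0 ∨ p i = 1/2) :
    {i | p i = 1/2}.ncard ≠ 1 := fun hone => by
  obtain ⟨k, hk⟩ := Set.ncard_eq_one.1 hone
  have hpk : p k = 1/2 := (Set.ext_iff.1 hk k).2 rfl
  have hsum : ∑ j, p j = p k := sum_eq_single k (fun j _ hjk =>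
    (hvals j).resolve_right fun h => hjk ((Set.ext_iff.1 hk j).1 h)) (by simp)
  linarith [(mem_spectraPolytope_iff.1 hp k).2.2]

lemma halfVertices_subset_spectraPolytope : halfVertices ι ⊆ spectraPolytope ι := by
  rintro p ⟨hvals, hone⟩ i
  have hnonneg : ∀ j, 0 ≤ p j := fun j => by rcases hvals j with h | h <;> norm_num [h]
  refine ⟨hnonneg i, by rcases hvals i with h | h <;> norm_num [h], ?_⟩
  rcases hvals i with h | h
  · exact h ▸ sum_nonneg fun j _ => hnonneg j
  obtain ⟨j, hj, hji⟩ : ∃ j, p j = 1/2 ∧ j ≠ i := by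
    by_contra! hc
    exact hone (Set.ncard_eq_one.2 ⟨i, Set.ext fun j => ⟨fun hj => hc j hj, fun hj => hj ▸ h⟩⟩)
  calc p i = p j := h.trans hj.symm
    _ ≤ ∑ k ∈ univ.erase i, p k :=
      single_le_sum (fun k _ => hnonneg k) (mem_erase.2 ⟨hji, mem_univ j⟩)

lemma spectraPolytope_subset_pi_Icc :
    spectraPolytope ι ⊆ Set.univ.pi fun _ => Set.Icc 0 (1/2) :=
  fun _ hp i _ => ⟨(hp i).1, (hp i).2.1⟩

theorem extremePoints_spectraPolytope :
    (spectraPolytope ι).extremePoints ℝ = halfVertices ι := by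
  refine Set.Subset.antisymm (fun p hp => ?_) fun p hp => ?_
  · have hvals := eq_zero_or_eq_half_of_mem_extremePoints hp
    exact ⟨hvals, ncard_setOf_eq_half_ne_one hp.1 hvals⟩
  · refine inter_extremePoints_subset_extremePoints_of_subset spectraPolytope_subset_pi_Icc
      ⟨halfVertices_subset_spectraPolytope hp, ?_⟩
    rw [extremePoints_pi]
    intro i _
    rw [Set.extremePoints_Icc (by norm_num)]
    exact hp.1 i

end

theorem ncard_halfVertices (ι : Type*) [Fintype ι] :
    (halfVertices ι).ncard = 2 ^ Fintype.card ι - Fintype.card ι := by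
  classical
  set f : Finset ι → ι → ℝ := fun A i => if i ∈ A then 1/2 else 0
  have hf : ∀ A, {i | f A i = 1/2} = A := fun A => by ext i; by_cases hi : i ∈ A <;> simp [f, hi]
  have himage : halfVertices ι = f '' {A | A.card ≠ 1} := by
    ext p
    constructor
    · rintro ⟨hvals, hone⟩
      refine ⟨univ.filter fun i => p i = 1/2, by simpa [Set.ncard_eq_toFinset_card'] using hone, ?_⟩
      funext i
      rcases hvals i with h | h <;> simp [f, h]
    · rintro ⟨A, hA, rfl⟩
      refine ⟨fun i => ?_, by rwa [hf, Set.ncard_coe_finset]⟩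
      by_cases hi : i ∈ A <;> simp [f, hi]
  have hinj : Function.Injective f := fun A B hAB =>
    Finset.coe_injective <| by rw [← hf A, ← hf B, hAB]
  have hcompl :
      {A : Finset ι | A.card ≠ 1} = ↑(univ \ univ.powersetCard 1 : Finset (Finset ι)) := by
    ext A; simp
  rw [himage, Set.ncard_image_of_injective _ hinj, hcompl, Set.ncard_coe_finset,
    card_sdiff_of_subset (subset_univ _), card_powersetCard, card_univ, card_univ,
    Fintype.card_finset, Nat.choose_one_right]

theorem stmt2_general (L : ℕ) :
    (Set.extremePoints ℝ
        {p : Fin L → ℝ | ∀ i, 0 ≤ p i ∧ p i ≤ 1/2 ∧ p i ≤ ∑ j ∈ Finset.univ.erase i, p j}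
      = {p : Fin L → ℝ | (∀ i, p i = 0 ∨ p i = 1/2) ∧ {i | p i = 1/2}.ncard ≠ 1}) ∧
    ({p : Fin L → ℝ | (∀ i, p i = 0 ∨ p i = 1/2) ∧ {i | p i = 1/2}.ncard ≠ 1}).ncard
      = 2 ^ L - L :=
  ⟨extremePoints_spectraPolytope, (ncard_halfVertices (Fin L)).trans (by rw [Fintype.card_fin])⟩

/-- For `L ≥ 3`, the extreme points (vertices) of the polytope
`{p ∈ ℝ^L : 0 ≤ p_i ≤ 1/2, p_i ≤ Σ_{j≠i} p_j}` are exactly the points with all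
coordinates in `{0, 1/2}` and with the number of coordinates equal to `1/2` different
from `1`; there are `2^L − L` of them. -/
theorem stmt2 (L : ℕ) (hL : 3 ≤ L) :
    (Set.extremePoints ℝ
        {p : Fin L → ℝ | ∀ i, 0 ≤ p i ∧ p i ≤ 1/2 ∧ p i ≤ ∑ j ∈ Finset.univ.erase i, p j}
      = {p : Fin L → ℝ | (∀ i, p i = 0 ∨ p i = 1/2) ∧ {i | p i = 1/2}.ncard ≠ 1}) ∧
    ({p : Fin L → ℝ | (∀ i, p i = 0 ∨ p i = 1/2) ∧ {i | p i = 1/2}.ncard ≠ 1}).ncard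
      = 2 ^ L - L :=
  stmt2_general L
end

section
/- For a normalized state φ in the eigenspace H_{-L+2} described above (spanned by |1 1…1⟩ and the vectors |0⟩⊗|1…1 0_l 1…1⟩ for l=2,…,L), the shifted eigenvalues λ_l = 1/2 − min(spec ρ_l(φ)) satisfy −λ₁ + Σ_{l=2}^{L} λ_l = L/2 − 1. -/
open Matrix BigOperators

/-- The reduced one-qubit density matrix of the `l`-th qubit of the state
`φ ∈ (ℂ²)^⊗L` (partial trace of `|φ⟩⟨φ|` over all other qubits). -/
noncomputable def reducedDensity (L : ℕ) (φ : (Fin L → Fin 2) → ℂ) (l : Fin L) :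
    Matrix (Fin 2) (Fin 2) ℂ :=
  fun i j => ∑ s : Fin L → Fin 2,
    if s l = i then φ s * star (φ (Function.update s l j)) else 0

/-- `wPattern L l` is, for `l = 1`, `|1 1…1⟩`, and for `l ≥ 2` the basis state with the
first and `l`-th qubits in `|0⟩` and the rest in `|1⟩`. -/
def wPattern (L : ℕ) [NeZero L] (l : Fin L) : Fin L → Fin 2 :=
  if l = 0 then (fun _ => 1) else (fun m => if m = 0 ∨ m = l then 0 else 1)

/-!
The basis states in the support of `φ` are at pairwise Hamming distance `2`, so flipping one
qubit never maps one of them to another. Hence every `ρ_l(φ)` is diagonal, its entries being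
the total weights `Σ |c_m|²` of the basis states whose `l`-th qubit is `0` resp. `1`. For
`l = 1` these are `Σ_{k≥2} |c_k|²` and `|c₁|²`, so `p₁ = Σ_{k≥2} |c_k|²`; for `l ≥ 2` they are
`|c_l|²` and `Σ_{k≠l} |c_k|² ≥ |c₁|² ≥ Σ_{k≥2} |c_k|² ≥ |c_l|²`, so `p_l = |c_l|²`. These
contributions cancel in `−λ₁ + Σ_{l≥2} λ_l`.
-/

open Finset

section Hamming

variable {ι : Type*} [Fintype ι] [DecidableEq ι] {β : ι → Type*} [∀ i, DecidableEq (β i)]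

theorem hammingDist_update_le_one (x : ∀ i, β i) (l : ι) (b : β l) :
    hammingDist x (Function.update x l b) ≤ 1 := by
  refine card_le_one.mpr fun i hi k hk => ?_
  have ne_l : ∀ {i}, i ∈ univ.filter (fun i => x i ≠ Function.update x l b i) → i = l :=
    fun {i} hi => by_contra fun h => (mem_filter.mp hi).2 (Function.update_of_ne h b x).symm
  rw [ne_l hi, ne_l hk]

theorem two_le_hammingDist {x y : ∀ i, β i} {a b : ι} (hab : a ≠ b) (ha : x a ≠ y a)
    (hb : x b ≠ y b) : 2 ≤ hammingDist x y := by
  rw [← card_pair hab]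
  exact card_le_card fun i hi => by
    rcases mem_insert.mp hi with rfl | hi
    · exact mem_filter.mpr ⟨mem_univ _, ha⟩
    · exact mem_filter.mpr ⟨mem_univ _, (mem_singleton.mp hi) ▸ hb⟩

end Hamming

def superposition {L : ℕ} {ι : Type*} [Fintype ι] (w : ι → Fin L → Fin 2) (c : ι → ℂ) :
    (Fin L → Fin 2) → ℂ :=
  fun s => ∑ m, c m * (if s = w m then 1 else 0)

section Superposition

variable {L : ℕ} {ι : Type*} [Fintype ι] [DecidableEq ι] {w : ι → Fin L → Fin 2}

theorem superposition_update_apply (hw : Pairwise fun m n => 2 ≤ hammingDist (w m) (w n))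
    (c : ι → ℂ) (m : ι) (l : Fin L) (j : Fin 2) :
    superposition w c (Function.update (w m) l j) = if j = w m l then c m else 0 := by
  have update_eq_iff : ∀ n, Function.update (w m) l j = w n ↔ n = m ∧ j = w m l := by
    intro n
    constructor
    · intro h
      obtain rfl : n = m := by
        by_contra hnm
        have far := hw (Ne.symm hnm)
        have near := hammingDist_update_le_one (w m) l j
        rw [h] at near
        omega
      exact ⟨rfl, Function.update_eq_self_iff.mp h⟩
    · rintro ⟨rfl, rfl⟩
      exact Function.update_eq_self _ _
  simp only [superposition, update_eq_iff, ite_and, mul_ite, mul_one, mul_zero]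
  rw [sum_ite_eq' univ m]
  simp

theorem reducedDensity_superposition_apply
    (hw : Pairwise fun m n => 2 ≤ hammingDist (w m) (w n)) (c : ι → ℂ) (l : Fin L) (i j : Fin 2) :
    reducedDensity L (superposition w c) l i j =
      ∑ m, if w m l = i ∧ j = w m l then c m * star (c m) else 0 := by
  have expand : ∀ s, (if s l = i then
        superposition w c s * star (superposition w c (Function.update s l j)) else 0) =
      ∑ m, if s = w m then (if w m l = i then
        c m * star (superposition w c (Function.update (w m) l j)) else 0) else 0 := by
    intro s
    by_cases hsl : s l = i
    · rw [if_pos hsl, superposition, sum_mul]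
      refine sum_congr rfl fun m _ => ?_
      by_cases hs : s = w m
      · subst hs; simp [hsl]
      · simp [hs]
    · refine (if_neg hsl).trans (sum_eq_zero fun m _ => ?_).symm
      by_cases hs : s = w m
      · subst hs; simp [hsl]
      · simp [hs]
  rw [reducedDensity, sum_congr rfl fun s _ => expand s, sum_comm]
  refine sum_congr rfl fun m _ => ?_
  rw [sum_ite_eq' univ (w m), if_pos (mem_univ _), superposition_update_apply hw]
  by_cases h : j = w m l <;> simp [h]

theorem reducedDensity_superposition (hw : Pairwise fun m n => 2 ≤ hammingDist (w m) (w n))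
    (c : ι → ℂ) (l : Fin L) :
    reducedDensity L (superposition w c) l =
      diagonal fun i => ((∑ m ∈ univ.filter (fun m => w m l = i), ‖c m‖ ^ 2 : ℝ) : ℂ) := by
  ext i j
  rw [reducedDensity_superposition_apply hw]
  rcases eq_or_ne i j with rfl | hij
  · rw [diagonal_apply_eq, sum_filter]
    push_cast
    refine sum_congr rfl fun m _ => ?_
    by_cases h : w m l = i
    · simp [h, Complex.mul_conj, Complex.normSq_eq_norm_sq]
    · simp [h]
  · rw [diagonal_apply_ne _ hij]
    exact sum_eq_zero fun m _ => if_neg fun ⟨h1, h2⟩ => hij (h1 ▸ h2 ▸ rfl)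

end Superposition

theorem eq_of_isLeast_spectrum_diagonal {n : Type*} [Fintype n] [DecidableEq n]
    {d : n → ℝ} {p : ℝ} {i : n}
    (hp : IsLeast {x : ℝ | (x : ℂ) ∈ spectrum ℂ (diagonal fun j => (d j : ℂ))} p)
    (hi : ∀ j, d i ≤ d j) : p = d i := by
  have real_spectrum :
      {x : ℝ | (x : ℂ) ∈ spectrum ℂ (diagonal fun j => (d j : ℂ))} = Set.range d := by
    ext x
    simp [spectrum_diagonal]
  rw [real_spectrum] at hp
  exact hp.unique ⟨Set.mem_range_self i, Set.forall_mem_range.mpr hi⟩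

section WPattern

variable {L : ℕ} [NeZero L]

theorem wPattern_apply_zero (m : Fin L) : wPattern L m 0 = if m = 0 then 1 else 0 := by
  by_cases hm : m = 0 <;> simp [wPattern, hm]

theorem wPattern_apply_of_ne_zero {l : Fin L} (hl : l ≠ 0) (m : Fin L) :
    wPattern L m l = if m = l then 0 else 1 := by
  by_cases hm : m = 0
  · simp [wPattern, hm, Ne.symm hl]
  · rcases eq_or_ne m l with rfl | hml
    · simp [wPattern, hm]
    · simp [wPattern, hm, hml, hl, Ne.symm hml]

theorem filter_wPattern_apply_zero_eq_zero :
    univ.filter (fun m : Fin L => wPattern L m 0 = 0) = univ.erase 0 := by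
  ext m; by_cases hm : m = 0 <;> simp [wPattern_apply_zero, hm]

theorem filter_wPattern_apply_zero_eq_one :
    univ.filter (fun m : Fin L => wPattern L m 0 = 1) = {0} := by
  ext m; by_cases hm : m = 0 <;> simp [wPattern_apply_zero, hm]

theorem filter_wPattern_apply_eq_zero {l : Fin L} (hl : l ≠ 0) :
    univ.filter (fun m : Fin L => wPattern L m l = 0) = {l} := by
  ext m; by_cases hm : m = l <;> simp [wPattern_apply_of_ne_zero hl, hm]

theorem filter_wPattern_apply_eq_one {l : Fin L} (hl : l ≠ 0) :
    univ.filter (fun m : Fin L => wPattern L m l = 1) = univ.erase l := by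
  ext m; by_cases hm : m = l <;> simp [wPattern_apply_of_ne_zero hl, hm]

theorem pairwise_two_le_hammingDist_wPattern :
    Pairwise fun m n : Fin L => 2 ≤ hammingDist (wPattern L m) (wPattern L n) := by
  intro m n hmn
  rcases eq_or_ne m 0 with rfl | hm
  · exact two_le_hammingDist hmn (by simp [wPattern_apply_zero, hmn.symm])
      (by simp [wPattern_apply_of_ne_zero hmn.symm, hmn])
  rcases eq_or_ne n 0 with rfl | hn
  · exact two_le_hammingDist hm.symm (by simp [wPattern_apply_zero, hm])
      (by simp [wPattern_apply_of_ne_zero hm, hm.symm])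
  · exact two_le_hammingDist hmn (by simp [wPattern_apply_of_ne_zero hm, hmn.symm])
      (by simp [wPattern_apply_of_ne_zero hn, hmn])

end WPattern

theorem stmt7_general (L : ℕ) [NeZero L] (c : Fin L → ℂ)
    (hbig : ∑ k ∈ Finset.univ.erase 0, ‖c k‖ ^ 2 ≤ ‖c 0‖ ^ 2)
    (p lam : Fin L → ℝ)
    (hmin : ∀ l,
      ((p l : ℂ) ∈ spectrum ℂ
          (reducedDensity L (fun s => ∑ m, c m * (if s = wPattern L m then 1 else 0)) l)) ∧
      ∀ x : ℝ, (x : ℂ) ∈ spectrum ℂ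
          (reducedDensity L (fun s => ∑ m, c m * (if s = wPattern L m then 1 else 0)) l)
        → p l ≤ x)
    (hlam : ∀ l, lam l = 1/2 - p l) :
    -lam 0 + ∑ l ∈ Finset.univ.erase 0, lam l = L / 2 - 1 := by
  have hρ := reducedDensity_superposition pairwise_two_le_hammingDist_wPattern c
  have hp0 : p 0 = ∑ k ∈ univ.erase 0, ‖c k‖ ^ 2 := by
    have lowest := eq_of_isLeast_spectrum_diagonal (i := 0) (hρ 0 ▸ hmin 0)
    simp only [Fin.forall_fin_two, filter_wPattern_apply_zero_eq_zero,
      filter_wPattern_apply_zero_eq_one, sum_singleton] at lowest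
    exact lowest ⟨le_rfl, hbig⟩
  have hp : ∀ l ≠ 0, p l = ‖c l‖ ^ 2 := by
    intro l hl
    have lowest := eq_of_isLeast_spectrum_diagonal (i := 0) (hρ l ▸ hmin l)
    simp only [Fin.forall_fin_two, filter_wPattern_apply_eq_zero hl,
      filter_wPattern_apply_eq_one hl, sum_singleton] at lowest
    refine lowest ⟨le_rfl, ?_⟩
    calc ‖c l‖ ^ 2 ≤ ∑ k ∈ univ.erase 0, ‖c k‖ ^ 2 :=
          single_le_sum (fun k _ => sq_nonneg ‖c k‖) (mem_erase.mpr ⟨hl, mem_univ l⟩)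
      _ ≤ ‖c 0‖ ^ 2 := hbig
      _ ≤ ∑ k ∈ univ.erase l, ‖c k‖ ^ 2 :=
          single_le_sum (fun k _ => sq_nonneg ‖c k‖) (mem_erase.mpr ⟨hl.symm, mem_univ 0⟩)
  have sum_lam : ∑ l ∈ univ.erase 0, lam l = ∑ l ∈ univ.erase 0, (1 / 2 - ‖c l‖ ^ 2) :=
    sum_congr rfl fun l hl => by rw [hlam, hp l (ne_of_mem_erase hl)]
  rw [sum_lam, sum_sub_distrib, ← hp0, hlam 0, sum_erase_eq_sub (mem_univ 0), sum_const,
    card_univ, Fintype.card_fin, nsmul_eq_mul]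
  ring

/-- For a normalized state `φ = c₁|1…1⟩ + Σ_{l≥2} c_l |0⟩⊗|1…1 0_l 1…1⟩` in the
eigenspace `H_{-L+2}` (with `|c₁|² ≥ Σ_{k≥2}|c_k|²`), the shifted eigenvalues
`λ_l = 1/2 − p_l`, with `p_l` the smaller eigenvalue of `ρ_l(φ)`, satisfy
`−λ₁ + Σ_{l=2}^{L} λ_l = L/2 − 1`. -/
theorem stmt7 (L : ℕ) [NeZero L] (hL : 2 ≤ L) (c : Fin L → ℂ)
    (hnorm : ∑ l, ‖c l‖ ^ 2 = 1)
    (hbig : ∑ k ∈ Finset.univ.erase 0, ‖c k‖ ^ 2 ≤ ‖c 0‖ ^ 2)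
    (p lam : Fin L → ℝ)
    (hmin : ∀ l,
      ((p l : ℂ) ∈ spectrum ℂ
          (reducedDensity L (fun s => ∑ m, c m * (if s = wPattern L m then 1 else 0)) l)) ∧
      ∀ x : ℝ, (x : ℂ) ∈ spectrum ℂ
          (reducedDensity L (fun s => ∑ m, c m * (if s = wPattern L m then 1 else 0)) l)
        → p l ≤ x)
    (hlam : ∀ l, lam l = 1/2 - p l) :
    -lam 0 + ∑ l ∈ Finset.univ.erase 0, lam l = L / 2 - 1 :=
  stmt7_general L c hbig p lam hmin hlam
end
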